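/- Let u : ℝ² → S² ⊂ ℝ³ be a C¹ map with finite energy, i.e. ∫_{ℝ²} |∇u|² dx < ∞. Then (1/2)∫_{ℝ²} |∇u|² dx ≥ 4π |deg(u)|, where deg(u) = (1/4π)∫_{ℝ²} ∂_{x₁}u · (u × ∂_{x₂}u) dx (the integrand is absolutely integrable since |∂_{x₁}u · (u × ∂_{x₂}u)| ≤ (1/2)|∇u|² pointwise). -/

import Mathlib

/-!
The degree density `∂₁u · (u × ∂₂u)` is bounded pointwise by the energy density: since `|u| = 1`,
the Lagrange identity gives `|u × ∂₂u| ≤ |∂₂u|`, so Cauchy–Schwarz and AM–GM bound the density by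
`(|∂₁u|² + |∂₂u|²) / 2`. Integrating this bound gives the inequality.
-/

noncomputable section
open MeasureTheory Real Set Filter
open scoped RealInnerProductSpace Topology

/-- The plane `ℝ²` with its Euclidean structure. -/
abbrev V2 : Type := EuclideanSpace ℝ (Fin 2)
/-- The space `ℝ³` with its Euclidean structure. -/
abbrev V3 : Type := EuclideanSpace ℝ (Fin 3)

/-- The point `(a, b) ∈ ℝ²`. -/
def pt2 (a b : ℝ) : V2 := WithLp.toLp 2 ![a, b]

/-- The cross product in `ℝ³`. -/
def cross (u v : V3) : V3 :=
  WithLp.toLp 2 ![u 1 * v 2 - u 2 * v 1, u 2 * v 0 - u 0 * v 2, u 0 * v 1 - u 1 * v 0]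

/-- `e^{θR}`: rotation by angle `θ` about the `x₃`-axis. -/
def rot3 (θ : ℝ) (v : V3) : V3 :=
  WithLp.toLp 2 ![Real.cos θ * v 0 - Real.sin θ * v 1, Real.sin θ * v 0 + Real.cos θ * v 1, v 2]

/-- The generator `R` of horizontal rotations, `Rv = k × v` with `k = (0,0,1)`. -/
def Rgen (v : V3) : V3 := WithLp.toLp 2 ![-(v 1), v 0, 0]

/-- Directional (partial) derivative of a map `ℝ² → ℝ³` in direction `e`. -/
def pd (e : V2) (f : V2 → V3) (x : V2) : V3 := fderiv ℝ f x e

/-- The componentwise Laplacian on `ℝ²`. -/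
def lap (f : V2 → V3) (x : V2) : V3 :=
  pd (pt2 1 0) (pd (pt2 1 0) f) x + pd (pt2 0 1) (pd (pt2 0 1) f) x

/-- Squared homogeneous Sobolev seminorm `‖f‖_{Ḣ^k}² = ∫ |∇^k f|²`. -/
def sobSq (k : ℕ) (f : V2 → V3) : ℝ := ∫ x : V2, ‖iteratedFDeriv ℝ k f x‖ ^ 2

/-- The degree one harmonic map `φ(x) = e^{θR} Q(r)`,
`Q = (h₁, 0, h₃)`, `h₁(r) = 2r/(r²+1)`, `h₃(r) = (r²-1)/(r²+1)`. -/
def phi1 (x : V2) : V3 :=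
  WithLp.toLp 2 ![2 * x 0 / (x 0 ^ 2 + x 1 ^ 2 + 1), 2 * x 1 / (x 0 ^ 2 + x 1 ^ 2 + 1),
    (x 0 ^ 2 + x 1 ^ 2 - 1) / (x 0 ^ 2 + x 1 ^ 2 + 1)]

lemma norm_sq_eq_sum_three (v : V3) : ‖v‖ ^ 2 = v 0 ^ 2 + v 1 ^ 2 + v 2 ^ 2 := by
  rw [EuclideanSpace.norm_sq_eq]
  simp [Fin.sum_univ_three]

lemma inner_eq_sum_three (v w : V3) : ⟪v, w⟫ = v 0 * w 0 + v 1 * w 1 + v 2 * w 2 := by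
  simp only [PiLp.inner_apply, RCLike.inner_apply, conj_trivial, Fin.sum_univ_three]
  ring

lemma norm_cross_sq (v w : V3) : ‖cross v w‖ ^ 2 = ‖v‖ ^ 2 * ‖w‖ ^ 2 - ⟪v, w⟫ ^ 2 := by
  simp only [norm_sq_eq_sum_three, inner_eq_sum_three, cross, Matrix.cons_val_zero,
    Matrix.cons_val_one, Matrix.cons_val]
  ring

lemma norm_cross_le (v w : V3) : ‖cross v w‖ ≤ ‖v‖ * ‖w‖ := by
  refine (pow_le_pow_iff_left₀ (norm_nonneg _) (by positivity) two_ne_zero).1 ?_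
  rw [norm_cross_sq, mul_pow]
  linarith [sq_nonneg ⟪v, w⟫]

lemma abs_inner_cross_le_of_norm_eq_one {a b c : V3} (hc : ‖c‖ = 1) :
    |⟪a, cross c b⟫| ≤ (‖a‖ ^ 2 + ‖b‖ ^ 2) / 2 :=
  calc |⟪a, cross c b⟫| ≤ ‖a‖ * ‖cross c b‖ := abs_real_inner_le_norm _ _
    _ ≤ ‖a‖ * ‖b‖ := by
      gcongr
      simpa [hc] using norm_cross_le c b
    _ ≤ (‖a‖ ^ 2 + ‖b‖ ^ 2) / 2 := by linarith [two_mul_le_add_sq ‖a‖ ‖b‖]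

theorem energy_ge_four_pi_deg (u : V2 → V3)
    (hsph : ∀ x, ‖u x‖ = 1)
    (hfin : Integrable (fun x : V2 => ‖pd (pt2 1 0) u x‖ ^ 2 + ‖pd (pt2 0 1) u x‖ ^ 2)) :
    (1 / 2) * (∫ x : V2, (‖pd (pt2 1 0) u x‖ ^ 2 + ‖pd (pt2 0 1) u x‖ ^ 2)) ≥
      4 * π * |(1 / (4 * π)) *
        ∫ x : V2, ⟪pd (pt2 1 0) u x, cross (u x) (pd (pt2 0 1) u x)⟫| := by
  have hdensity : ∀ x, ‖⟪pd (pt2 1 0) u x, cross (u x) (pd (pt2 0 1) u x)⟫‖ ≤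
      (1 / 2) * (‖pd (pt2 1 0) u x‖ ^ 2 + ‖pd (pt2 0 1) u x‖ ^ 2) := fun x => by
    rw [Real.norm_eq_abs]
    linarith [abs_inner_cross_le_of_norm_eq_one (a := pd (pt2 1 0) u x) (b := pd (pt2 0 1) u x)
      (hsph x)]
  rw [ge_iff_le, abs_mul, abs_of_pos (by positivity : (0 : ℝ) < 1 / (4 * π)), ← mul_assoc,
    mul_one_div_cancel (by positivity), one_mul, ← integral_const_mul]
  exact norm_integral_le_of_norm_le (hfin.const_mul _) (ae_of_all _ hdensity)
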